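/- arXiv:1609.06764 — 3 statements merged into one kernel-verified Lean document; each statement's English description precedes it below -/
import Mathlib

section
/- Let f : ℝ → ℝ be continuous with f(0) = 0, whose derivative f' exists, is right-continuous, and has bounded total variation, and suppose f is constant outside [0,1]. Fix points x₁, …, xₙ ∈ [0,1]. Then there exist K ≤ n + 2, knots t₁, …, t_K ∈ [0,1], and weights w₁, …, w_K ∈ ℝ with ∑ⱼ wⱼ = 0 and ∑ⱼ |wⱼ| ≤ TV(f'), such that the degree-one spline f̂(x) = ∑ⱼ wⱼ · max(x − tⱼ, 0) satisfies f̂(xᵢ) = f(xᵢ) for all i = 1, …, n. -/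
open Set Finset

private lemma deriv_zero_of_const_left {f f' : ℝ → ℝ} (hderiv : ∀ x, HasDerivAt f (f' x) x)
    {a c : ℝ} (h : ∀ x ≤ a, f x = c) : f' a = 0 := by
  have h2 : HasDerivWithinAt (fun _ : ℝ => c) (f' a) (Set.Iic a) a :=
    (hderiv a).hasDerivWithinAt.congr (fun y hy => (h y hy).symm) (h a le_rfl).symm
  exact (uniqueDiffOn_Iic a a Set.self_mem_Iic).eq_deriv _ h2 (hasDerivWithinAt_const a _ c)

private lemma deriv_zero_of_const_right {f f' : ℝ → ℝ} (hderiv : ∀ x, HasDerivAt f (f' x) x)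
    {a c : ℝ} (h : ∀ x ≥ a, f x = c) : f' a = 0 := by
  have h2 : HasDerivWithinAt (fun _ : ℝ => c) (f' a) (Set.Ici a) a :=
    (hderiv a).hasDerivWithinAt.congr (fun y hy => (h y hy).symm) (h a le_rfl).symm
  exact (uniqueDiffOn_Ici a a Set.self_mem_Ici).eq_deriv _ h2 (hasDerivWithinAt_const a _ c)

/-- Existence of a degree-one saturating spline with at most `n + 2` knots
matching `f` on the data points, with no larger total variation of the derivative. -/
theorem stmt0 (f f' : ℝ → ℝ) (hf : Continuous f) (hf0 : f 0 = 0)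
    (hderiv : ∀ x, HasDerivAt f (f' x) x)
    (hrc : ∀ x, ContinuousWithinAt f' (Set.Ici x) x)
    (hbv : BoundedVariationOn f' Set.univ)
    (hconst₀ : ∀ x ≤ (0:ℝ), f x = f 0) (hconst₁ : ∀ x ≥ (1:ℝ), f x = f 1)
    (n : ℕ) (x : Fin n → ℝ) (hx : ∀ i, x i ∈ Set.Icc (0:ℝ) 1) :
    ∃ K : ℕ, K ≤ n + 2 ∧ ∃ (t : Fin K → ℝ) (w : Fin K → ℝ),
      (∀ j, t j ∈ Set.Icc (0:ℝ) 1) ∧ (∑ j, w j = 0) ∧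
      (∑ j, |w j|) ≤ (eVariationOn f' Set.univ).toReal ∧
      ∀ i, (∑ j, w j * max (x i - t j) 0) = f (x i) := by
  classical
  have hf'0 : f' 0 = 0 := deriv_zero_of_const_left hderiv hconst₀
  have hf'1 : f' 1 = 0 := deriv_zero_of_const_right hderiv hconst₁
  set S : Finset ℝ := insert 0 (insert 1 (Finset.image x Finset.univ)) with hSdef
  set K := S.card with hKdef
  have hK : K ≤ n + 2 := by
    calc K ≤ (insert (1:ℝ) (Finset.image x Finset.univ)).card + 1 := Finset.card_insert_le _ _
    _ ≤ ((Finset.image x Finset.univ).card + 1) + 1 :=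
        Nat.add_le_add_right (Finset.card_insert_le _ _) 1
    _ ≤ (n + 1) + 1 := by
        have := Finset.card_image_le (f := x) (s := Finset.univ)
        simp only [Finset.card_univ, Fintype.card_fin] at this
        omega
    _ = n + 2 := by ring
  have hSmem : ∀ y ∈ S, y ∈ Set.Icc (0:ℝ) 1 := by
    intro y hy
    simp only [hSdef, Finset.mem_insert, Finset.mem_image] at hy
    rcases hy with rfl | rfl | ⟨i, _, rfl⟩
    · exact ⟨le_rfl, zero_le_one⟩
    · exact ⟨zero_le_one, le_rfl⟩
    · exact hx i
  set e := S.orderIsoOfFin (rfl : S.card = K) with hedef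
  set s : ℕ → ℝ := fun k => if h : k < K then (e ⟨k, h⟩ : ℝ) else 0 with hsdef
  have hs_mem : ∀ k, k < K → s k ∈ S := by
    intro k hk; simp only [hsdef, dif_pos hk]; exact (e ⟨k, hk⟩).2
  have hs_mono : ∀ a b : ℕ, a < b → b < K → s a < s b := by
    intro a b hab hb
    simp only [hsdef, dif_pos (hab.trans hb), dif_pos hb]
    exact Subtype.coe_lt_coe.2 (e.lt_iff_lt.2 (by exact hab))
  have hs_le : ∀ a b : ℕ, a ≤ b → b < K → s a ≤ s b := by
    intro a b hab hb
    rcases hab.lt_or_eq with h | rfl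
    · exact (hs_mono a b h hb).le
    · exact le_rfl
  have hs_surj : ∀ y ∈ S, ∃ k, ∃ _ : k < K, s k = y := by
    intro y hy
    obtain ⟨i, hi⟩ := e.surjective ⟨y, hy⟩
    refine ⟨i.1, i.2, ?_⟩
    simp only [hsdef, dif_pos i.2]
    rw [dif_pos (show (i:ℕ) < K from i.2)]
    exact congrArg Subtype.val hi
  have hKpos : 0 < K := Finset.card_pos.2 ⟨0, by simp [hSdef]⟩
  have hs0 : s 0 = 0 := by
    obtain ⟨k, hk, hks⟩ := hs_surj 0 (by simp [hSdef])
    have h1 : s 0 ≤ 0 := hks ▸ hs_le 0 k (Nat.zero_le _) hk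
    have h2 : 0 ≤ s 0 := (hSmem _ (hs_mem 0 hKpos)).1
    linarith
  have hslast : s (K - 1) = 1 := by
    obtain ⟨k, hk, hks⟩ := hs_surj 1 (by simp [hSdef])
    have h1 : (1:ℝ) ≤ s (K - 1) := hks ▸ hs_le k (K - 1) (by omega) (by omega)
    have h2 : s (K - 1) ≤ 1 := (hSmem _ (hs_mem _ (by omega))).2
    linarith
  have hMVT : ∀ k, k + 1 < K → ∃ c ∈ Set.Ioo (s k) (s (k+1)),
      f' c = (f (s (k+1)) - f (s k)) / (s (k+1) - s k) := by
    intro k hk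
    exact exists_hasDerivAt_eq_slope f f' (hs_mono k (k+1) (lt_add_one k) hk)
      hf.continuousOn (fun y _ => hderiv y)
  set ξ : ℕ → ℝ := fun k => if h : k + 1 < K then (hMVT k h).choose else 0 with hxidef
  have hξ : ∀ k (h : k + 1 < K), ξ k ∈ Set.Ioo (s k) (s (k+1)) ∧
      f' (ξ k) = (f (s (k+1)) - f (s k)) / (s (k+1) - s k) := by
    intro k h
    simp only [hxidef, dif_pos h]
    exact ⟨(hMVT k h).choose_spec.1, (hMVT k h).choose_spec.2⟩
  set p : ℕ → ℝ := fun k => if h : 0 < k ∧ k < K then f' (ξ (k - 1)) else 0 with hpdef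
  have hp0 : p 0 = 0 := by simp [hpdef]
  have hpK : ∀ k, K ≤ k → p k = 0 := by
    intro k hk; simp only [hpdef]; rw [dif_neg]; omega
  have hp_succ : ∀ k, k + 1 < K → p (k + 1) = f' (ξ k) := by
    intro k hk
    simp only [hpdef]
    rw [dif_pos ⟨Nat.succ_pos k, hk⟩, Nat.add_sub_cancel]
  have hslope : ∀ k, k + 1 < K → p (k + 1) * (s (k+1) - s k) = f (s (k+1)) - f (s k) := by
    intro k hk
    have hne : s (k+1) - s k ≠ 0 := sub_ne_zero.2 (hs_mono k (k+1) (lt_add_one k) hk).ne'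
    rw [hp_succ k hk, (hξ k hk).2, div_mul_cancel₀ _ hne]
  set q : ℕ → ℝ := fun k => if k = 0 then 0 else if k < K then ξ (k - 1) else 1 with hqdef
  have hpq : ∀ k, p k = f' (q k) := by
    intro k
    rcases Nat.eq_zero_or_pos k with rfl | hk
    · simp [hpdef, hqdef, hf'0]
    · by_cases hkK : k < K
      · have hc : 0 < k ∧ k < K := ⟨hk, hkK⟩
        simp only [hpdef, hqdef, dif_pos hc, if_neg (Nat.pos_iff_ne_zero.1 hk), if_pos hkK]
      · simp only [hpdef, hqdef, if_neg (Nat.pos_iff_ne_zero.1 hk), if_neg hkK, hf'1]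
        rw [dif_neg]; omega
  have hq_mono : Monotone q := by
    apply monotone_nat_of_le_succ
    intro k
    rcases Nat.eq_zero_or_pos k with rfl | hk
    · simp only [hqdef, if_pos rfl, if_neg Nat.one_ne_zero]
      by_cases h1 : 1 < K
      · rw [if_pos h1]
        have := (hξ 0 (by omega)).1.1
        rw [hs0] at this
        simp only [Nat.sub_self]
        linarith
      · rw [if_neg h1]; norm_num
    · have hkne : k ≠ 0 := Nat.pos_iff_ne_zero.1 hk
      by_cases h2 : k + 1 < K
      · have h1 : k < K := by omega
        simp only [hqdef, if_neg hkne, if_pos h1, if_neg (Nat.succ_ne_zero k), if_pos h2,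
          Nat.add_sub_cancel]
        have ha := (hξ (k-1) (by omega)).1.2
        have hb := (hξ k h2).1.1
        rw [show k - 1 + 1 = k by omega] at ha
        linarith
      · by_cases h1 : k < K
        · simp only [hqdef, if_neg hkne, if_pos h1, if_neg (Nat.succ_ne_zero k), if_neg h2]
          have ha := (hξ (k-1) (by omega)).1.2
          rw [show k - 1 + 1 = k by omega] at ha
          have hb : s k ≤ s (K-1) := hs_le k (K-1) (by omega) (by omega)
          rw [hslast] at hb
          linarith
        · simp only [hqdef, if_neg hkne, if_neg h1, if_neg (Nat.succ_ne_zero k),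
            if_neg (show ¬ k + 1 < K by omega)]
          exact le_rfl
  refine ⟨K, hK, fun j => s j.1, fun j => p (j.1 + 1) - p j.1, ?_, ?_, ?_, ?_⟩
  · intro j
    exact hSmem _ (hs_mem j.1 j.2)
  · rw [Fin.sum_univ_eq_sum_range (fun k => p (k+1) - p k) K, Finset.sum_range_sub,
      hp0, hpK K le_rfl, sub_zero]
  · rw [Fin.sum_univ_eq_sum_range (fun k => |p (k+1) - p k|) K]
    have hsum := eVariationOn.sum_le (f := f') (s := Set.univ) (n := K) hq_mono (fun i => Set.mem_univ _)
    calc ∑ k ∈ Finset.range K, |p (k+1) - p k|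
        = ∑ k ∈ Finset.range K, (edist (f' (q (k+1))) (f' (q k))).toReal := by
          refine Finset.sum_congr rfl fun k _ => ?_
          rw [hpq (k+1), hpq k, ← dist_edist, Real.dist_eq]
      _ = (∑ k ∈ Finset.range K, edist (f' (q (k+1))) (f' (q k))).toReal := by
          rw [ENNReal.toReal_sum (fun k _ => edist_ne_top _ _)]
      _ ≤ (eVariationOn f' Set.univ).toReal := ENNReal.toReal_mono hbv hsum
  · intro i
    obtain ⟨r, hr, hrs⟩ := hs_surj (x i) (by
      simp only [hSdef, Finset.mem_insert, Finset.mem_image]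
      exact Or.inr (Or.inr ⟨i, Finset.mem_univ i, rfl⟩))
    rw [← hrs]
    rw [Fin.sum_univ_eq_sum_range (fun k => (p (k+1) - p k) * max (s r - s k) 0) K]
    have step1 : ∑ k ∈ Finset.range K, (p (k+1) - p k) * max (s r - s k) 0
        = ∑ k ∈ Finset.range r, (p (k+1) - p k) * (s r - s k) := by
      rw [← Finset.sum_subset (Finset.range_subset_range.2 hr.le)
        (fun k hkK hk => by
          simp only [Finset.mem_range, not_lt] at hk
          have hkK' : k < K := Finset.mem_range.1 hkK
          have : s r ≤ s k := hs_le r k hk hkK'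
          rw [max_eq_right (by linarith), mul_zero])]
      refine Finset.sum_congr rfl fun k hk => ?_
      have hkr : k < r := Finset.mem_range.1 hk
      have : s k ≤ s r := hs_le k r hkr.le hr
      rw [max_eq_left (by linarith)]
    rw [step1]
    have key : ∀ k ∈ Finset.range r, (p (k+1) - p k) * (s r - s k)
        = ((fun m => p m * (s r - s m)) (k+1) - (fun m => p m * (s r - s m)) k)
          + ((fun m => f (s m)) (k+1) - (fun m => f (s m)) k) := by
      intro k hk
      have hkr : k < r := Finset.mem_range.1 hk
      have h1 : k + 1 < K := by omega
      have h2 := hslope k h1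
      simp only
      linear_combination h2
    rw [Finset.sum_congr rfl key, Finset.sum_add_distrib,
      Finset.sum_range_sub (fun m => p m * (s r - s m)) r,
      Finset.sum_range_sub (fun m => f (s m)) r]
    simp only [hp0, hs0, hf0]
    ring
end

section
/- Let g ∈ ℝⁿ, x₁, …, xₙ ∈ [0,1], τ > 0, and define ψ(t) = (max(x₁ − t, 0), …, max(xₙ − t, 0)) ∈ ℝⁿ for t ∈ [0,1]. Let t₊ minimize ⟨g, ψ(t)⟩ over t ∈ [0,1] and t₋ minimize −⟨g, ψ(t)⟩ over t ∈ [0,1], and set s⋆ = (τ/2) δ_{t₊} − (τ/2) δ_{t₋}. Suppose min_t ⟨g, ψ(t)⟩ + min_t −⟨g, ψ(t)⟩ < 0. Then for every finite signed measure s on [0,1] with s([0,1]) = 0 and ‖s‖ ≤ τ, we have ∫ ⟨g, ψ(t)⟩ ds(t) ≥ ∫ ⟨g, ψ(t)⟩ ds⋆(t), i.e., s⋆ is optimal for the linearized problem. -/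
open MeasureTheory

/-- Integral of a function against a finite signed measure on `[0,1]`,
defined via the Jordan decomposition. -/
noncomputable def sInt (μ : MeasureTheory.SignedMeasure (Set.Icc (0:ℝ) 1))
    (f : Set.Icc (0:ℝ) 1 → ℝ) : ℝ :=
  (∫ t, f t ∂μ.toJordanDecomposition.posPart) -
    ∫ t, f t ∂μ.toJordanDecomposition.negPart

/-- The spline `f_μ(x) = ∫ max (x - t) 0 dμ(t)` associated to a signed measure `μ`. -/
noncomputable def fmu (μ : MeasureTheory.SignedMeasure (Set.Icc (0:ℝ) 1)) (x : ℝ) : ℝ :=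
  sInt μ (fun t => max (x - (t : ℝ)) 0)

/-- Optimality of the two-point measure `s⋆ = (τ/2) δ_{t₊} - (τ/2) δ_{t₋}` for the
linearized problem: any feasible signed measure `s` (net mass zero, total variation
at most `τ`) has linearized objective value at least that of `s⋆`. -/
theorem stmt5 (n : ℕ) (g x : Fin n → ℝ) (hx : ∀ i, x i ∈ Set.Icc (0:ℝ) 1)
    (τ : ℝ) (hτ : 0 < τ) (tp tm : Set.Icc (0:ℝ) 1)
    (htp : ∀ t : Set.Icc (0:ℝ) 1,
      (∑ i, g i * max (x i - (tp:ℝ)) 0) ≤ ∑ i, g i * max (x i - (t:ℝ)) 0)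
    (htm : ∀ t : Set.Icc (0:ℝ) 1,
      -(∑ i, g i * max (x i - (tm:ℝ)) 0) ≤ -(∑ i, g i * max (x i - (t:ℝ)) 0))
    (hneg : (∑ i, g i * max (x i - (tp:ℝ)) 0) + -(∑ i, g i * max (x i - (tm:ℝ)) 0) < 0)
    (s : MeasureTheory.SignedMeasure (Set.Icc (0:ℝ) 1)) (hs0 : s Set.univ = 0)
    (hsτ : (s.totalVariation Set.univ).toReal ≤ τ) :
    sInt s (fun t => ∑ i, g i * max (x i - (t:ℝ)) 0) ≥
      τ / 2 * (∑ i, g i * max (x i - (tp:ℝ)) 0) -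
        τ / 2 * (∑ i, g i * max (x i - (tm:ℝ)) 0) := by
  set F : Set.Icc (0:ℝ) 1 → ℝ := fun t => ∑ i, g i * max (x i - (t:ℝ)) 0 with hF
  have hFc : Continuous F := by
    apply continuous_finset_sum
    intro i _
    exact continuous_const.mul ((continuous_const.sub continuous_subtype_val).max continuous_const)
  set μp := s.toJordanDecomposition.posPart with hμp
  set μn := s.toJordanDecomposition.negPart with hμn
  have hfin_p : IsFiniteMeasure μp := inferInstance
  have hfin_n : IsFiniteMeasure μn := inferInstance
  set a := (μp Set.univ).toReal with ha
  set b := (μn Set.univ).toReal with hb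
  have hab : a = b := by
    have := s.toSignedMeasure_toJordanDecomposition
    have h2 : s.toJordanDecomposition.toSignedMeasure Set.univ = 0 := by rw [this]; exact hs0
    rw [JordanDecomposition.toSignedMeasure, VectorMeasure.sub_apply,
      Measure.toSignedMeasure_apply_measurable MeasurableSet.univ,
      Measure.toSignedMeasure_apply_measurable MeasurableSet.univ] at h2
    have h2' : a - b = 0 := h2
    linarith
  have htv : a + b ≤ τ := by
    have : s.totalVariation Set.univ = μp Set.univ + μn Set.univ := by
      rw [SignedMeasure.totalVariation, Measure.add_apply]
    rw [this, ENNReal.toReal_add (measure_ne_top _ _) (measure_ne_top _ _)] at hsτ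
    exact hsτ
  have ha2 : a ≤ τ / 2 := by rw [hab] at htv ⊢; linarith
  have ha0 : 0 ≤ a := ENNReal.toReal_nonneg
  have hcs : HasCompactSupport F := HasCompactSupport.of_compactSpace F
  have hint_p : Integrable F μp := hFc.integrable_of_hasCompactSupport hcs
  have hint_n : Integrable F μn := hFc.integrable_of_hasCompactSupport hcs
  have hlow : F tp * a ≤ ∫ t, F t ∂μp := by
    have := integral_mono (integrable_const (F tp)) hint_p htp
    rwa [integral_const, smul_eq_mul, mul_comm] at this
  have hhigh : ∫ t, F t ∂μn ≤ F tm * b := by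
    have := integral_mono hint_n (integrable_const (F tm)) (fun t => by linarith [htm t])
    rwa [integral_const, smul_eq_mul, mul_comm] at this
  rw [← hab] at hhigh
  have e1 : (∑ i, g i * max (x i - (tp:ℝ)) 0) = F tp := rfl
  have e2 : (∑ i, g i * max (x i - (tm:ℝ)) 0) = F tm := rfl
  show (∫ t, F t ∂μp) - (∫ t, F t ∂μn) ≥ _
  rw [e1, e2]
  have hd : F tp - F tm < 0 := by linarith
  have h3 : τ / 2 * (F tp - F tm) ≤ a * (F tp - F tm) :=
    mul_le_mul_of_nonpos_right ha2 hd.le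
  have h4 : a * (F tp - F tm) = F tp * a - F tm * a := by ring
  linarith [hlow, hhigh, h3, h4, hab]
end

section
/- Let C = { ±τ·(max(x₁ − t, 0), …, max(xₙ − t, 0), 1) : t ∈ [0,1] } ⊆ ℝ^{n+1} for fixed τ > 0 and x₁, …, xₙ ∈ [0,1]. Let μ be a finite signed measure on [0,1] with total variation norm ‖μ‖ = τ. Then the vector v = (∫ max(x₁ − t,0) dμ(t), …, ∫ max(xₙ − t,0) dμ(t), μ([0,1])) lies in the closed convex hull of C. -/
open MeasureTheory

/-- The vector of hinge integrals of `μ` together with its net mass lies in the closed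
convex hull of the set `C = {±τ (ψ(t), 1) : t ∈ [0,1]}`, when `‖μ‖ = τ`. -/
theorem stmt16 (n : ℕ) (τ : ℝ) (hτ : 0 < τ) (x : Fin n → ℝ)
    (hx : ∀ i, x i ∈ Set.Icc (0:ℝ) 1)
    (μ : MeasureTheory.SignedMeasure (Set.Icc (0:ℝ) 1))
    (hμ : (μ.totalVariation Set.univ).toReal = τ) :
    (Fin.snoc (fun i => fmu μ (x i)) (μ Set.univ) : Fin (n + 1) → ℝ) ∈
      closure (convexHull ℝ
        {v : Fin (n + 1) → ℝ | ∃ t ∈ Set.Icc (0:ℝ) 1, ∃ ε : ℝ, (ε = 1 ∨ ε = -1) ∧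
          v = fun i => ε * τ * (Fin.snoc (fun i' => max (x i' - t) 0) 1 : Fin (n + 1) → ℝ) i}) := by
  by_contra hcon
  set C : Set (Fin (n + 1) → ℝ) :=
    {v : Fin (n + 1) → ℝ | ∃ t ∈ Set.Icc (0:ℝ) 1, ∃ ε : ℝ, (ε = 1 ∨ ε = -1) ∧
      v = fun i => ε * τ * (Fin.snoc (fun i' => max (x i' - t) 0) 1 : Fin (n + 1) → ℝ) i}
    with hCdef
  obtain ⟨f, u, hfs, hfv⟩ :=
    geometric_hahn_banach_closed_point ((convex_convexHull ℝ C).closure) isClosed_closure hcon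
  set P := μ.toJordanDecomposition.posPart with hPdef
  set N := μ.toJordanDecomposition.negPart with hNdef
  set ψ : Set.Icc (0:ℝ) 1 → (Fin (n + 1) → ℝ) :=
    fun t => Fin.snoc (fun i' => max (x i' - (t : ℝ)) 0) 1 with hψdef
  have hψc : ∀ i, Continuous fun t => ψ t i := by
    intro i
    refine Fin.lastCases ?_ ?_ i
    · simpa [hψdef] using continuous_const
    · intro j
      simp only [hψdef, Fin.snoc_castSucc]
      exact (continuous_const.sub continuous_subtype_val).max continuous_const
  have hψcont : Continuous ψ := continuous_pi hψc
  have hCS : ∀ h : Set.Icc (0:ℝ) 1 → ℝ, HasCompactSupport h := fun h =>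
    IsCompact.of_isClosed_subset isCompact_univ (isClosed_tsupport _) (Set.subset_univ _)
  have hintP : ∀ i, Integrable (fun t => ψ t i) P := fun i =>
    (hψc i).integrable_of_hasCompactSupport (hCS _)
  have hintN : ∀ i, Integrable (fun t => ψ t i) N := fun i =>
    (hψc i).integrable_of_hasCompactSupport (hCS _)
  set c : Fin (n + 1) → ℝ := fun i => f (Pi.single i 1) with hcdef
  have hf : ∀ w : Fin (n + 1) → ℝ, f w = ∑ i, c i * w i := by
    intro w
    calc f w = f (∑ i, Pi.single i (w i)) := by rw [Finset.univ_sum_single]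
      _ = ∑ i, f (Pi.single i (w i)) := map_sum f _ _
      _ = ∑ i, c i * w i := by
          refine Finset.sum_congr rfl fun i _ => ?_
          have h1 : Pi.single i (w i) = w i • (Pi.single i (1:ℝ) : Fin (n+1) → ℝ) := by
            funext j
            by_cases hji : j = i
            · subst hji; simp
            · simp [Pi.single_eq_of_ne hji]
          rw [h1, f.map_smul, smul_eq_mul, hcdef, mul_comm]
  -- bounds
  have hub : ∀ t, f (ψ t) < u / τ := by
    intro t
    have hmem : (fun i => (1:ℝ) * τ * ψ t i) ∈ C := ⟨(t : ℝ), t.2, 1, Or.inl rfl, rfl⟩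
    have := hfs _ (subset_closure (subset_convexHull ℝ C hmem))
    have heq : (fun i => (1:ℝ) * τ * ψ t i) = τ • ψ t := by
      funext i; simp [smul_eq_mul]
    rw [heq, f.map_smul, smul_eq_mul] at this
    rw [lt_div_iff₀ hτ]; linarith
  have hlb : ∀ t, -(u / τ) < f (ψ t) := by
    intro t
    have hmem : (fun i => (-1:ℝ) * τ * ψ t i) ∈ C := ⟨(t : ℝ), t.2, -1, Or.inr rfl, rfl⟩
    have := hfs _ (subset_closure (subset_convexHull ℝ C hmem))
    have heq : (fun i => (-1:ℝ) * τ * ψ t i) = (-τ) • ψ t := by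
      funext i; simp [smul_eq_mul]
    rw [heq, f.map_smul, smul_eq_mul] at this
    have : -(f (ψ t)) < u / τ := by rw [lt_div_iff₀ hτ]; nlinarith
    linarith
  have hgintP : Integrable (fun t => f (ψ t)) P :=
    (f.continuous.comp hψcont).integrable_of_hasCompactSupport (hCS _)
  have hgintN : Integrable (fun t => f (ψ t)) N :=
    (f.continuous.comp hψcont).integrable_of_hasCompactSupport (hCS _)
  have h1 : ∫ t, f (ψ t) ∂P ≤ (u / τ) * (P Set.univ).toReal := by
    calc ∫ t, f (ψ t) ∂P ≤ ∫ _, (u / τ) ∂P :=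
          integral_mono hgintP (integrable_const _) fun t => (hub t).le
      _ = (u / τ) * (P Set.univ).toReal := by rw [integral_const, smul_eq_mul, mul_comm]; rfl
  have h2 : -((u / τ) * (N Set.univ).toReal) ≤ ∫ t, f (ψ t) ∂N := by
    calc -((u / τ) * (N Set.univ).toReal) = ∫ _, -(u / τ) ∂N := by
          rw [integral_const, smul_eq_mul]; simp only [Measure.real]; ring
      _ ≤ ∫ t, f (ψ t) ∂N :=
          integral_mono (integrable_const _) hgintN fun t => (hlb t).le
  have hmass : (P Set.univ).toReal + (N Set.univ).toReal = τ := by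
    rw [SignedMeasure.totalVariation, Measure.add_apply,
      ENNReal.toReal_add (measure_ne_top _ _) (measure_ne_top _ _)] at hμ
    exact hμ
  -- f v as integral
  have hlast : μ Set.univ = (P Set.univ).toReal - (N Set.univ).toReal := by
    conv_lhs => rw [← μ.toSignedMeasure_toJordanDecomposition]
    rw [JordanDecomposition.toSignedMeasure]
    rw [VectorMeasure.sub_apply,
      Measure.toSignedMeasure_apply_measurable MeasurableSet.univ,
      Measure.toSignedMeasure_apply_measurable MeasurableSet.univ]
    rfl
  have hcomp : ∀ i, (Fin.snoc (fun i => fmu μ (x i)) (μ Set.univ) : Fin (n + 1) → ℝ) i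
      = (∫ t, ψ t i ∂P) - ∫ t, ψ t i ∂N := by
    intro i
    refine Fin.lastCases ?_ ?_ i
    · simp only [hψdef, Fin.snoc_last]
      rw [hlast, integral_const, integral_const, smul_eq_mul, smul_eq_mul, mul_one, mul_one]; rfl
    · intro j
      simp only [Fin.snoc_castSucc, hψdef]
      rfl
  have hfP : ∫ t, f (ψ t) ∂P = ∑ i, c i * ∫ t, ψ t i ∂P := by
    simp_rw [hf]
    rw [integral_finset_sum _ fun i _ => ((hintP i).const_mul (c i))]
    exact Finset.sum_congr rfl fun i _ => integral_const_mul _ _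
  have hfN : ∫ t, f (ψ t) ∂N = ∑ i, c i * ∫ t, ψ t i ∂N := by
    simp_rw [hf]
    rw [integral_finset_sum _ fun i _ => ((hintN i).const_mul (c i))]
    exact Finset.sum_congr rfl fun i _ => integral_const_mul _ _
  have hfveq : f (Fin.snoc (fun i => fmu μ (x i)) (μ Set.univ) : Fin (n + 1) → ℝ)
      = (∫ t, f (ψ t) ∂P) - ∫ t, f (ψ t) ∂N := by
    rw [hf, hfP, hfN, ← Finset.sum_sub_distrib]
    refine Finset.sum_congr rfl fun i _ => ?_
    rw [hcomp i]; ring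
  have hfin : (u / τ) * τ = u := div_mul_cancel₀ u hτ.ne'
  rw [hfveq] at hfv
  have hdist : u / τ * (P Set.univ).toReal + u / τ * (N Set.univ).toReal = u / τ * τ := by
    rw [← mul_add, hmass]
  linarith [h1, h2, hfv, hfin, hdist]
end
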